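/- Second syzygies are joins of first syzygies: for a finitely presented multiparameter persistence module M, if s is a grade in the support of the (j+1)-st multigraded Betti number ξ_{j+1}(M) for j ≥ 1, then there exist grades r_1, ..., r_m in the support of ξ_j(M) whose join (coordinatewise maximum) equals s. -/

import Mathlib

structure PMod (P : Type) [Preorder P] (K : Type) [Field K] where
  V : P → Type
  [addCommGroup : ∀ a, AddCommGroup (V a)]
  [module : ∀ a, Module K (V a)]
  map : ∀ a b : P, a ≤ b → (V a →ₗ[K] V b)
  map_refl : ∀ a, map a a le_rfl = LinearMap.id
  map_comp : ∀ a b c (hab : a ≤ b) (hbc : b ≤ c),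
    (map b c hbc).comp (map a b hab) = map a c (hab.trans hbc)

attribute [instance] PMod.addCommGroup PMod.module

/-- The free multiparameter persistence module on the graded set `(ι, g)`:
at grade `a` it is the space of finitely supported families supported on the
generators whose grade lies below `a`. -/
noncomputable def freePMod {n : ℕ} (K : Type) [Field K] {ι : Type}
    (g : ι → (Fin n → ℝ)) : PMod (Fin n → ℝ) K where
  V a := ↥(Finsupp.supported K K {j | g j ≤ a})
  map a b h := Submodule.inclusion
    (Finsupp.supported_mono (fun j (hj : g j ≤ a) => hj.trans h))
  map_refl a := rfl
  map_comp a b c hab hbc := rfl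

/-- A morphism of persistence modules: a natural family of linear maps. -/
structure PHom {P : Type} [Preorder P] {K : Type} [Field K] (M N : PMod P K) where
  app : ∀ a, M.V a →ₗ[K] N.V a
  natural : ∀ a b (h : a ≤ b), (app b).comp (M.map a b h) = (N.map a b h).comp (app a)

/-- A free resolution of a multiparameter persistence module `M`: an exact sequence
`... → F₂ → F₁ → F₀ → M → 0` of free persistence modules. -/
structure FreeResolution {n : ℕ} {K : Type} [Field K] (M : PMod (Fin n → ℝ) K) where
  X : ℕ → Type
  gr : ∀ i, X i → (Fin n → ℝ)
  d : ∀ i, PHom (freePMod K (gr (i + 1))) (freePMod K (gr i))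
  aug : PHom (freePMod K (gr 0)) M
  aug_surj : ∀ a, LinearMap.range (aug.app a) = ⊤
  exact0 : ∀ a, LinearMap.range ((d 0).app a) = LinearMap.ker (aug.app a)
  exact : ∀ i a, LinearMap.range ((d (i + 1)).app a) = LinearMap.ker ((d i).app a)

/-- The graded piece at `a` of the submodule `I·F` of a free module `F`, where `I` is
the augmentation ideal generated by the monomials of strictly positive grade. -/
noncomputable def augIdealPiece {n : ℕ} {K : Type} [Field K] {ι : Type}
    (g : ι → (Fin n → ℝ)) (a : Fin n → ℝ) : Submodule K ((freePMod K g).V a) :=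
  Submodule.comap (Finsupp.supported K K {j | g j ≤ a}).subtype
    (Finsupp.supported K K {j | g j ≤ a ∧ g j ≠ a})

/-- A free resolution is minimal if `ker pᵢ ⊆ I·Fᵢ` for all `i`. -/
def FreeResolution.Minimal {n : ℕ} {K : Type} [Field K] {M : PMod (Fin n → ℝ) K}
    (F : FreeResolution M) : Prop :=
  (∀ a, LinearMap.ker (F.aug.app a) ≤ augIdealPiece (F.gr 0) a) ∧
  (∀ i a, LinearMap.ker ((F.d i).app a) ≤ augIdealPiece (F.gr (i + 1)) a)

/-- The basis element of a free persistence module corresponding to the generator `j`,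
at its own grade. -/
noncomputable def basisElt {n : ℕ} {K : Type} [Field K] {ι : Type}
    (g : ι → (Fin n → ℝ)) (j : ι) : (freePMod K g).V (g j) :=
  ⟨Finsupp.single j 1, Finsupp.single_mem_supported K 1 (le_refl (g j))⟩

/-- A multiparameter persistence module is finitely presented iff it is pointwise
finite dimensional and finitely determined by a finite grid of grades. -/
def FinitelyPresented {n : ℕ} {K : Type} [Field K] (M : PMod (Fin n → ℝ) K) : Prop :=
  ∃ S : Finset (Fin n → ℝ),
    (∀ a, FiniteDimensional K (M.V a)) ∧
    (∀ a b (h : a ≤ b), (∀ g ∈ S, g ≤ a ↔ g ≤ b) → Function.Bijective (M.map a b h)) ∧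
    (∀ a, (∀ g ∈ S, ¬ g ≤ a) → ∀ x : M.V a, x = 0)

/-!
Let `a` be the grade of a generator `s` of `F_{j+1}` and `v = d(e_s) ∈ F_j(a)`, which is nonzero
by minimality. The grades of the generators in the support of `v` are bounded by `a`; if they were
all bounded by some `b ≤ a` with `b ≠ a`, then `v` would already live in `F_j(b)`, where it is still
a cycle because the structure maps of the free module `F_{j-1}` are injective. Exactness at `b`
writes it as `d w` with `w` supported away from `s`, so `e_s - w` is a cycle at grade `a` with
coefficient `1` at `s`, contradicting minimality. Hence `a` is the join of those grades.
-/

section FreePMod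

variable {n : ℕ} {K : Type} [Field K] {ι : Type} {g : ι → (Fin n → ℝ)}

theorem freePMod_map_injective {a b : Fin n → ℝ} (h : a ≤ b) :
    Function.Injective ((freePMod K g).map a b h) :=
  Submodule.inclusion_injective
    (Finsupp.supported_mono fun j (hj : g j ≤ a) => hj.trans h)

theorem freePMod_exists_map_eq {a b : Fin n → ℝ} (h : b ≤ a) (x : (freePMod K g).V a)
    (hx : ∀ r ∈ x.1.support, g r ≤ b) : ∃ y, (freePMod K g).map b a h y = x :=
  ⟨⟨x.1, (Finsupp.mem_supported K _).mpr hx⟩, rfl⟩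

theorem basisElt_apply_self (s : ι) : (basisElt (K := K) g s).1 s = 1 :=
  Finsupp.single_eq_same

theorem notMem_augIdealPiece_of_apply_ne_zero {s : ι} (x : (freePMod K g).V (g s))
    (hx : x.1 s ≠ 0) : x ∉ augIdealPiece g (g s) := fun hmem =>
  ((Finsupp.mem_supported K _).mp hmem (Finsupp.mem_support_iff.mpr hx)).2 rfl

theorem PHom.app_eq_zero_of_app_map_eq_zero {M : PMod (Fin n → ℝ) K}
    (e : PHom M (freePMod K g)) {a b : Fin n → ℝ} (h : a ≤ b) {x : M.V a}
    (hx : e.app b (M.map a b h x) = 0) : e.app a x = 0 :=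
  freePMod_map_injective h <| by
    rw [← LinearMap.comp_apply, ← e.natural, LinearMap.comp_apply, hx, map_zero]

end FreePMod

section MinimalExact

variable {n : ℕ} {K : Type} [Field K] {ι₀ ι₁ ι₂ : Type}
  {g₀ : ι₀ → (Fin n → ℝ)} {g₁ : ι₁ → (Fin n → ℝ)} {g₂ : ι₂ → (Fin n → ℝ)}
  (d : PHom (freePMod K g₂) (freePMod K g₁))

theorem PHom.support_app_basisElt_nonempty
    (hmin : ∀ a, LinearMap.ker (d.app a) ≤ augIdealPiece g₂ a) (s : ι₂) :
    (d.app (g₂ s) (basisElt g₂ s)).1.support.Nonempty :=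
  Finsupp.support_nonempty_iff.mpr fun h =>
    notMem_augIdealPiece_of_apply_ne_zero _ (by rw [basisElt_apply_self]; exact one_ne_zero)
      (hmin _ (Subtype.ext h))

theorem PHom.grade_le_of_support_app_basisElt_le (e : PHom (freePMod K g₁) (freePMod K g₀))
    (hexact : ∀ a, LinearMap.range (d.app a) = LinearMap.ker (e.app a))
    (hmin : ∀ a, LinearMap.ker (d.app a) ≤ augIdealPiece g₂ a) (s : ι₂)
    {b : Fin n → ℝ} (hb : b ≤ g₂ s)
    (hsupp : ∀ r ∈ (d.app (g₂ s) (basisElt g₂ s)).1.support, g₁ r ≤ b) : g₂ s ≤ b := by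
  obtain ⟨v, hv⟩ := freePMod_exists_map_eq hb _ hsupp
  obtain ⟨w, rfl⟩ : v ∈ LinearMap.range (d.app b) := by
    rw [hexact]
    refine e.app_eq_zero_of_app_map_eq_zero hb ?_
    rw [hv, ← LinearMap.mem_ker, ← hexact]
    exact ⟨_, rfl⟩
  by_contra hs
  have hws : w.1 s = 0 := by
    by_contra hws
    exact hs (w.2 (Finsupp.mem_support_iff.mpr hws))
  have hcycle : basisElt g₂ s - (freePMod K g₂).map b _ hb w ∈ LinearMap.ker (d.app (g₂ s)) := by
    rw [LinearMap.mem_ker, map_sub, ← LinearMap.comp_apply (d.app _), d.natural,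
      LinearMap.comp_apply, hv, sub_self]
  refine notMem_augIdealPiece_of_apply_ne_zero _ ?_ (hmin _ hcycle)
  change (basisElt g₂ s).1 s - w.1 s ≠ 0
  rw [basisElt_apply_self, hws, sub_zero]
  exact one_ne_zero

theorem PHom.isLUB_grade_support_app_basisElt (e : PHom (freePMod K g₁) (freePMod K g₀))
    (hexact : ∀ a, LinearMap.range (d.app a) = LinearMap.ker (e.app a))
    (hmin : ∀ a, LinearMap.ker (d.app a) ≤ augIdealPiece g₂ a) (s : ι₂) :
    IsLUB (g₁ '' (d.app (g₂ s) (basisElt g₂ s)).1.support) (g₂ s) := by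
  refine ⟨?_, fun c hc => ?_⟩
  · rintro _ ⟨r, hr, rfl⟩
    exact (d.app _ _).2 hr
  · exact (d.grade_le_of_support_app_basisElt_le e hexact hmin s inf_le_left
      fun r hr => le_inf ((d.app _ _).2 hr) (hc ⟨r, hr, rfl⟩)).trans inf_le_right

end MinimalExact

theorem exists_fin_eq_iSup_of_isLUB {n : ℕ} {ι : Type} {f : ι → (Fin n → ℝ)} {T : Finset ι}
    (hT : T.Nonempty) {x : Fin n → ℝ} (hx : IsLUB (f '' T) x) :
    ∃ (m : ℕ) (_ : 0 < m) (rs : Fin m → ι), x = fun i => ⨆ t, f (rs t) i := by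
  refine ⟨T.card, hT.card_pos, fun t => T.equivFin.symm t, ?_⟩
  have : Nonempty (Fin T.card) := ⟨⟨0, hT.card_pos⟩⟩
  have hrange : Set.range (fun t => f (T.equivFin.symm t)) = f '' T := by
    ext y
    simp only [Set.mem_range, Set.mem_image, Finset.mem_coe]
    exact ⟨fun ⟨t, ht⟩ => ⟨_, (T.equivFin.symm t).2, ht⟩,
      fun ⟨r, hr, hy⟩ => ⟨T.equivFin ⟨r, hr⟩, by simpa using hy⟩⟩
  funext i
  rw [← iSup_apply, hx.unique (hrange ▸ isLUB_ciSup (Set.finite_range _).bddAbove)]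

theorem syzygy_grade_is_join_general {n : ℕ} {K : Type} [Field K]
    (M : PMod (Fin n → ℝ) K)
    (F : FreeResolution M) (hmin : F.Minimal)
    (j : ℕ) (hj : 1 ≤ j) (s : F.X (j + 1)) :
    ∃ (m : ℕ) (_ : 0 < m) (rs : Fin m → F.X j),
      F.gr (j + 1) s = fun i => ⨆ t, F.gr j (rs t) i := by
  obtain ⟨i, rfl⟩ := Nat.exists_eq_add_of_le' hj
  exact exists_fin_eq_iSup_of_isLUB ((F.d (i + 1)).support_app_basisElt_nonempty (hmin.2 _) s)
    ((F.d (i + 1)).isLUB_grade_support_app_basisElt (F.d i) (F.exact i) (hmin.2 _) s)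

/-- Higher syzygies are joins of lower syzygies: for a finitely presented
multiparameter persistence module `M` with a minimal free resolution, if `s` is a
generator in homological degree `j + 1` with `j ≥ 1`, then its grade is the join
(coordinatewise maximum) of the grades of finitely many degree-`j` generators. -/
theorem syzygy_grade_is_join {n : ℕ} {K : Type} [Field K]
    (M : PMod (Fin n → ℝ) K) (hfp : FinitelyPresented M)
    (F : FreeResolution M) (hfin : ∀ i, Finite (F.X i)) (hmin : F.Minimal)
    (j : ℕ) (hj : 1 ≤ j) (s : F.X (j + 1)) :
    ∃ (m : ℕ) (_ : 0 < m) (rs : Fin m → F.X j),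
      F.gr (j + 1) s = fun i => ⨆ t, F.gr j (rs t) i :=
  syzygy_grade_is_join_general M F hmin j hj s
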